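/- arXiv:2412.01023 — 4 statements merged into one kernel-verified Lean document; each statement's English description precedes it below -/
import Mathlib

section
/- The Einstein midpoint of points z₁, …, z_n in the Klein ball lies in the Klein ball: if c‖z_i‖² < 1 for all i and γ_i = 1/√(1 − c‖z_i‖²), then the point w = (Σᵢ γᵢ zᵢ)/(Σᵢ γᵢ) satisfies c‖w‖² < 1. -/
theorem stmt_10 {d n : ℕ} (hn : 0 < n) (c : ℝ) (hc : 0 < c)
    (z : Fin n → EuclideanSpace ℝ (Fin d))
    (hz : ∀ i, c * ‖z i‖ ^ 2 < 1)
    (γ : Fin n → ℝ) (hγ : ∀ i, γ i = 1 / Real.sqrt (1 - c * ‖z i‖ ^ 2)) :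
    c * ‖(∑ i, γ i)⁻¹ • ∑ i, γ i • z i‖ ^ 2 < 1 := by
  have hγpos : ∀ i, 0 < γ i := by
    intro i
    rw [hγ i]
    have h1 : 0 < 1 - c * ‖z i‖ ^ 2 := by linarith [hz i]
    positivity
  have hS : 0 < ∑ i, γ i :=
    Finset.sum_pos (fun i _ => hγpos i) (by simp [Finset.univ_nonempty_iff, Fin.pos_iff_nonempty.mp hn])
  haveI : Nonempty (Fin n) := Fin.pos_iff_nonempty.mp hn
  obtain ⟨j, _, hj⟩ := Finset.exists_max_image Finset.univ (fun i => ‖z i‖) ⟨Classical.arbitrary _, Finset.mem_univ _⟩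
  have hbound : ‖∑ i, γ i • z i‖ ≤ (∑ i, γ i) * ‖z j‖ := by
    calc ‖∑ i, γ i • z i‖ ≤ ∑ i, ‖γ i • z i‖ := norm_sum_le _ _
      _ = ∑ i, γ i * ‖z i‖ := by
          refine Finset.sum_congr rfl fun i _ => ?_
          rw [norm_smul, Real.norm_eq_abs, abs_of_pos (hγpos i)]
      _ ≤ ∑ i, γ i * ‖z j‖ :=
          Finset.sum_le_sum fun i _ =>
            mul_le_mul_of_nonneg_left (hj i (Finset.mem_univ i)) (hγpos i).le
      _ = (∑ i, γ i) * ‖z j‖ := by rw [Finset.sum_mul]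
  have hw : ‖(∑ i, γ i)⁻¹ • ∑ i, γ i • z i‖ ≤ ‖z j‖ := by
    rw [norm_smul, Real.norm_eq_abs, abs_of_pos (inv_pos.mpr hS)]
    rw [inv_mul_le_iff₀ hS]
    linarith
  calc c * ‖(∑ i, γ i)⁻¹ • ∑ i, γ i • z i‖ ^ 2
      ≤ c * ‖z j‖ ^ 2 := by
        have := pow_le_pow_left₀ (norm_nonneg _) hw 2
        nlinarith
    _ < 1 := hz j
end

section
/- For unit-norm vectors u, v in ℝ^d scaled to norm 1 − ε (with small ε > 0, ξ := 2ε − ε²), the Poincaré distance (with c = 1) between them equals 2·ln((‖u−v‖ + √(‖u−v‖² + ξ²))/ξ); in particular, for fixed ξ > 0 this expression is a strictly increasing function of the Euclidean distance ‖u − v‖. -/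
open scoped RealInnerProductSpace

theorem stmt_12 {d : ℕ} (ε : ℝ) (hε : 0 < ε) (hε1 : ε < 1)
    (u v : EuclideanSpace ℝ (Fin d)) (hu : ‖u‖ = 1 - ε) (hv : ‖v‖ = 1 - ε)
    (ξ : ℝ) (hξ : ξ = 2 * ε - ε ^ 2)
    (pd : EuclideanSpace ℝ (Fin d) → EuclideanSpace ℝ (Fin d) → ℝ)
    (hpd : ∀ a b, pd a b = 2 * Real.log ((‖a - b‖ +
      Real.sqrt (‖a‖ ^ 2 * ‖b‖ ^ 2 - 2 * ⟪a, b⟫ + 1)) /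
      Real.sqrt ((1 - ‖a‖ ^ 2) * (1 - ‖b‖ ^ 2)))) :
    pd u v = 2 * Real.log ((‖u - v‖ + Real.sqrt (‖u - v‖ ^ 2 + ξ ^ 2)) / ξ) ∧
    (∀ t₁ t₂ : ℝ, 0 ≤ t₁ → t₁ < t₂ →
      2 * Real.log ((t₁ + Real.sqrt (t₁ ^ 2 + ξ ^ 2)) / ξ) <
      2 * Real.log ((t₂ + Real.sqrt (t₂ ^ 2 + ξ ^ 2)) / ξ)) := by
  have hξpos : 0 < ξ := by nlinarith
  constructor
  · rw [hpd]
    have h1 : ‖u - v‖ ^ 2 = ‖u‖ ^ 2 - 2 * ⟪u, v⟫ + ‖v‖ ^ 2 :=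
      norm_sub_sq_real u v
    have h2 : ‖u‖ ^ 2 * ‖v‖ ^ 2 - 2 * ⟪u, v⟫ + 1 = ‖u - v‖ ^ 2 + ξ ^ 2 := by
      rw [hu, hv] at h1
      rw [hu, hv]
      nlinarith [h1]
    have h3 : (1 - ‖u‖ ^ 2) * (1 - ‖v‖ ^ 2) = ξ ^ 2 := by
      rw [hu, hv]; nlinarith
    rw [h2, h3, Real.sqrt_sq hξpos.le]
  · intro t₁ t₂ ht₁ hlt
    have hs1 : 0 < Real.sqrt (t₁ ^ 2 + ξ ^ 2) := Real.sqrt_pos.mpr (by positivity)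
    apply mul_lt_mul_of_pos_left _ (by norm_num : (0:ℝ) < 2)
    apply Real.log_lt_log (div_pos (by linarith) hξpos)
    apply div_lt_div_of_pos_right _ hξpos
    exact add_lt_add_of_lt_of_le hlt
      (Real.sqrt_le_sqrt (by nlinarith))
end

section
/- Eigenspectrum of a balanced hierarchical Gram matrix (two intermediate levels): Let K be an n×n symmetric matrix defined by a balanced tree with C₀ = n leaves, C₁ groups at height 1 (each of size n/C₁), C₂ groups at height 2 (each containing C₁/C₂ height-1 groups), and C₃ = 1 root. Suppose K_{ii} = 1 and K_{ij} = r^h where h ∈ {1,2,3} is the height of the lowest common ancestor of leaves i and j, with r¹, r², r³ ≥ 0. Then the eigenvalues of K are: λ₀ = 1 − r¹ with multiplicity C₀ − C₁; λ₁ = λ₀ + (r¹ − r²)·C₀/C₁ with multiplicity C₁ − C₂; λ₂ = λ₁ + (r² − r³)·C₀/C₂ with multiplicity C₂ − 1; and λ₃ = λ₂ + C₀·r³ with multiplicity 1. -/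
/-!
If every fibre of `f : ι → κ` has `q` elements, then `M.submatrix f f = P * (M * Pᵀ)` for the
incidence matrix `P` of `f`, and `Pᵀ * P = q • 1`. The rectangular form of
`charpoly (A * B) = X ^ (|ι| - |κ|) * charpoly (B * A)` then gives
`det (a • 1 + M.submatrix f f) = a ^ (|ι| - |κ|) * det (a • 1 + q • M)`.

`K - x • 1` is such an expression nested three times (leaves → height-1 groups → height-2 groups
→ root), with diagonal shifts `1 - r¹ - x`, `r¹ - r²`, `r² - r³` and the constant `r³` at the root.
Each application peels off one eigenvalue with multiplicity `C_h - C_{h+1}`, and the last one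
leaves the `1 × 1` matrix `λ₃ - x`.
-/

open Matrix Finset

theorem Matrix.smul_one_add_smul_add_submatrix {ι κ R : Type*} [DecidableEq ι] [CommSemiring R]
    (a b c : R) (M : Matrix κ κ R) (f : ι → κ) :
    a • 1 + c • (b • 1 + M.submatrix f f) = (a + c * b) • 1 + (c • M).submatrix f f := by
  ext i j
  simp only [add_apply, smul_apply, submatrix_apply, smul_eq_mul]
  ring

section FiberwiseDeterminant

variable {ι κ R : Type*} [Fintype ι] [Fintype κ] [DecidableEq ι] [DecidableEq κ] [CommRing R]

theorem Matrix.det_smul_one_add_eq_eval_charpoly (a : R) (X : Matrix ι ι R) :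
    (a • 1 + X).det = (-X).charpoly.eval a := by
  rw [eval_charpoly, sub_neg_eq_add, scalar_apply, smul_one_eq_diagonal]

theorem Matrix.det_smul_one_add_submatrix (a : R) (M : Matrix κ κ R) (f : ι → κ)
    (hcard : Fintype.card κ ≤ Fintype.card ι) :
    (a • 1 + M.submatrix f f).det = a ^ (Fintype.card ι - Fintype.card κ) *
      (a • 1 + M * diagonal fun k => (#{i | f i = k} : R)).det := by
  let P : Matrix ι κ R := of fun i k => if f i = k then 1 else 0
  have hsub : M.submatrix f f = P * (M * Pᵀ) := by
    ext i j
    simp [P, mul_apply]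
  have hfiber : Pᵀ * P = diagonal fun k => (#{i | f i = k} : R) := by
    ext k k'
    simp only [P, mul_apply, transpose_apply, of_apply, diagonal_apply, ite_zero_mul_ite_zero,
      one_mul]
    split_ifs with h
    · simp [h, sum_boole]
    · exact sum_eq_zero fun i _ => if_neg fun hi => h (hi.1.symm.trans hi.2)
  rw [hsub, det_smul_one_add_eq_eval_charpoly, ← Matrix.neg_mul,
    charpoly_mul_comm_of_le _ _ hcard, Polynomial.eval_mul, Polynomial.eval_pow,
    Polynomial.eval_X, Matrix.mul_neg, ← det_smul_one_add_eq_eval_charpoly, Matrix.mul_assoc,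
    hfiber]

theorem Matrix.det_smul_one_add_submatrix_of_card_fiber (a : R) (M : Matrix κ κ R) {f : ι → κ}
    {q : ℕ} (hq : 0 < q) (hf : ∀ k, #{i | f i = k} = q) :
    (a • 1 + M.submatrix f f).det =
      a ^ (Fintype.card ι - Fintype.card κ) * (a • 1 + (q : R) • M).det := by
  have hcard : Fintype.card ι = Fintype.card κ * q := by
    rw [← card_univ, card_eq_sum_card_fiberwise fun i _ => mem_univ (f i)]
    simp [hf]
  rw [det_smul_one_add_submatrix a M f (hcard ▸ Nat.le_mul_of_pos_right _ hq)]
  simp only [hf, ← smul_one_eq_diagonal, Matrix.mul_smul, Matrix.mul_one]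

end FiberwiseDeterminant

theorem Fin.card_filter_divNat_eq {m n : ℕ} (k : Fin m) :
    #{i : Fin (m * n) | i.divNat = k} = n := by
  rw [← Fintype.card_subtype]
  exact (Fintype.card_congr
    { toFun := fun i => i.1.modNat
      invFun := fun j => ⟨Fin.mkDivMod k j, Fin.divNat_mkDivMod k j⟩
      left_inv := fun ⟨i, hi⟩ => by subst hi; simp
      right_inv := fun j => by simp }).trans (Fintype.card_fin n)

theorem sub_smul_one_eq_nested_submatrix {C₂ q₁ q₀ : ℕ} (r₁ r₂ r₃ x : ℝ)
    (K : Matrix (Fin (C₂ * q₁ * q₀)) (Fin (C₂ * q₁ * q₀)) ℝ)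
    (hK : ∀ i j, K i j = if i = j then 1
      else if i.val / q₀ = j.val / q₀ then r₁
      else if i.val / (q₁ * q₀) = j.val / (q₁ * q₀) then r₂ else r₃) :
    K - x • 1 = (1 - r₁ - x) • 1 + ((r₁ - r₂) • 1 + ((r₂ - r₃) • 1 +
      (of fun _ _ : Unit => r₃).submatrix (fun _ : Fin C₂ => ()) (fun _ => ())).submatrix
        Fin.divNat Fin.divNat).submatrix Fin.divNat Fin.divNat := by
  ext i j
  rw [Matrix.sub_apply, hK]
  simp only [Fin.ext_iff, Matrix.smul_apply, one_apply, smul_eq_mul, mul_ite, mul_one, mul_zero,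
    Matrix.add_apply, submatrix_apply, Fin.coe_divNat, Nat.div_div_eq_div_mul, mul_comm q₀, of_apply]
  by_cases hij : (i : ℕ) = j
  · simp only [hij, if_true]; ring
  by_cases h₁ : (i : ℕ) / q₀ = j / q₀
  · have h₂ : (i : ℕ) / (q₁ * q₀) = j / (q₁ * q₀) := by
      rw [Nat.mul_comm q₁, ← Nat.div_div_eq_div_mul, ← Nat.div_div_eq_div_mul, h₁]
    simp only [hij, h₁, h₂, if_true, if_false]; ring
  · simp only [hij, h₁, if_false]; split_ifs <;> ring

theorem stmt_14_general (C₀ C₁ C₂ : ℕ) (hC₀ : 0 < C₀)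
    (h21 : C₂ ∣ C₁) (h10 : C₁ ∣ C₀)
    (r₁ r₂ r₃ : ℝ)
    (K : Matrix (Fin C₀) (Fin C₀) ℝ)
    (hK : ∀ i j, K i j = if i = j then 1
      else if i.val / (C₀ / C₁) = j.val / (C₀ / C₁) then r₁
      else if i.val / (C₀ / C₂) = j.val / (C₀ / C₂) then r₂ else r₃) :
    ∀ x : ℝ, (K - x • (1 : Matrix (Fin C₀) (Fin C₀) ℝ)).det =
      ((1 - r₁) - x) ^ (C₀ - C₁) *
      ((1 - r₁ + (r₁ - r₂) * ((C₀ : ℝ) / (C₁ : ℝ))) - x) ^ (C₁ - C₂) *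
      ((1 - r₁ + (r₁ - r₂) * ((C₀ : ℝ) / (C₁ : ℝ)) +
        (r₂ - r₃) * ((C₀ : ℝ) / (C₂ : ℝ))) - x) ^ (C₂ - 1) *
      ((1 - r₁ + (r₁ - r₂) * ((C₀ : ℝ) / (C₁ : ℝ)) +
        (r₂ - r₃) * ((C₀ : ℝ) / (C₂ : ℝ)) + (C₀ : ℝ) * r₃) - x) := by
  intro x
  obtain ⟨q₁, rfl⟩ := h21
  obtain ⟨q₀, rfl⟩ := h10
  have hq₀ : 0 < q₀ := Nat.pos_of_mul_pos_left hC₀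
  have hq₁ : 0 < q₁ := Nat.pos_of_mul_pos_left (Nat.pos_of_mul_pos_right hC₀)
  have hC₂ : 0 < C₂ := Nat.pos_of_mul_pos_right (Nat.pos_of_mul_pos_right hC₀)
  have hdiv₁ : C₂ * q₁ * q₀ / (C₂ * q₁) = q₀ := Nat.mul_div_cancel_left q₀ (by positivity)
  have hdiv₂ : C₂ * q₁ * q₀ / C₂ = q₁ * q₀ := by rw [mul_assoc, Nat.mul_div_cancel_left _ hC₂]
  rw [hdiv₁, hdiv₂] at hK
  rw [sub_smul_one_eq_nested_submatrix r₁ r₂ r₃ x K hK,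
    det_smul_one_add_submatrix_of_card_fiber _ _ hq₀ Fin.card_filter_divNat_eq,
    smul_one_add_smul_add_submatrix,
    det_smul_one_add_submatrix_of_card_fiber _ _ hq₁ Fin.card_filter_divNat_eq,
    smul_smul, smul_one_add_smul_add_submatrix,
    det_smul_one_add_submatrix_of_card_fiber _ _ hC₂ (fun _ => by simp), det_unique]
  have hC₂' : (C₂ : ℝ) ≠ 0 := by positivity
  have hq₁' : (q₁ : ℝ) ≠ 0 := by positivity
  simp only [Fintype.card_fin, Fintype.card_unit, Matrix.add_apply, Matrix.smul_apply,
    one_apply_eq, of_apply, smul_eq_mul]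
  push_cast
  field_simp
  ring

theorem stmt_14 (C₀ C₁ C₂ : ℕ) (hC₀ : 0 < C₀) (hC₁ : 0 < C₁) (hC₂ : 0 < C₂)
    (h21 : C₂ ∣ C₁) (h10 : C₁ ∣ C₀)
    (r₁ r₂ r₃ : ℝ) (hr₁ : 0 ≤ r₁) (hr₂ : 0 ≤ r₂) (hr₃ : 0 ≤ r₃)
    (K : Matrix (Fin C₀) (Fin C₀) ℝ)
    (hK : ∀ i j, K i j = if i = j then 1
      else if i.val / (C₀ / C₁) = j.val / (C₀ / C₁) then r₁
      else if i.val / (C₀ / C₂) = j.val / (C₀ / C₂) then r₂ else r₃) :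
    ∀ x : ℝ, (K - x • (1 : Matrix (Fin C₀) (Fin C₀) ℝ)).det =
      ((1 - r₁) - x) ^ (C₀ - C₁) *
      ((1 - r₁ + (r₁ - r₂) * ((C₀ : ℝ) / (C₁ : ℝ))) - x) ^ (C₁ - C₂) *
      ((1 - r₁ + (r₁ - r₂) * ((C₀ : ℝ) / (C₁ : ℝ)) +
        (r₂ - r₃) * ((C₀ : ℝ) / (C₂ : ℝ))) - x) ^ (C₂ - 1) *
      ((1 - r₁ + (r₁ - r₂) * ((C₀ : ℝ) / (C₁ : ℝ)) +
        (r₂ - r₃) * ((C₀ : ℝ) / (C₂ : ℝ)) + (C₀ : ℝ) * r₃) - x) :=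
  stmt_14_general C₀ C₁ C₂ hC₀ h21 h10 r₁ r₂ r₃ K hK
end

section
/- Trace consistency of the balanced-tree eigenspectrum: the eigenvalues λ₀ (multiplicity C₀ − C₁), λ_h (multiplicity C_h − C_{h+1} for 1 ≤ h ≤ H−1), and λ_H (multiplicity 1), defined recursively by λ₀ = 1 − r¹, λ_h = λ_{h−1} + (r^h − r^{h+1})·C₀/C_h, λ_H = λ_{H−1} + C₀ r^H, sum (with multiplicity) to C₀, the trace of K. -/
theorem stmt_16 (H : ℕ) (hH : 1 ≤ H) (C : ℕ → ℕ) (r : ℕ → ℝ) (lam : ℕ → ℝ)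
    (hCH : C H = 1)
    (hdec : ∀ h, h < H → C (h + 1) < C h)
    (hdvd : ∀ h, h < H → C (h + 1) ∣ C h)
    (hlam0 : lam 0 = 1 - r 1)
    (hlam : ∀ h, 1 ≤ h → h ≤ H - 1 →
      lam h = lam (h - 1) + (r h - r (h + 1)) * ((C 0 : ℝ) / (C h : ℝ)))
    (hlamH : lam H = lam (H - 1) + (C 0 : ℝ) * r H) :
    ((C 0 - C 1 : ℕ) : ℝ) * lam 0 +
      (∑ h ∈ Finset.Icc 1 (H - 1), ((C h - C (h + 1) : ℕ) : ℝ) * lam h) +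
      lam H = (C 0 : ℝ) := by
  have hpos : ∀ h, h ≤ H → 0 < C h := by
    have key : ∀ k, 0 < C (H - k) := by
      intro k
      induction k with
      | zero => simp [hCH]
      | succ k ih =>
        rcases lt_or_ge k H with hk | hk
        · have h1 : H - (k + 1) < H := by omega
          have h2 := hdec (H - (k + 1)) h1
          have h3 : H - (k + 1) + 1 = H - k := by omega
          rw [h3] at h2
          omega
        · have h4 : H - (k + 1) = H - k := by omega
          rw [h4]; exact ih
    intro h hh
    have h5 : H - (H - h) = h := by omega
    rw [← h5]; exact key (H - h)
  set g : ℕ → ℝ := fun h => (C h : ℝ) * lam h + (C 0 : ℝ) * r (h + 1) with hg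
  match H, hH with
  | 1, _ =>
    have hC1 : C 1 = 1 := hCH
    have hC0 : 1 < C 0 := by have h2 : C 1 < C 0 := hdec 0 (by norm_num); omega
    have h1 : lam 1 = lam 0 + (C 0 : ℝ) * r 1 := by simpa using hlamH
    rw [show (1 : ℕ) - 1 = 0 from rfl, Finset.Icc_eq_empty (by omega), Finset.sum_empty]
    rw [hC1, h1, hlam0]
    push_cast [Nat.cast_sub hC0.le]
    ring
  | (m + 2), _ =>
    have key : ∀ h < m + 1, ((C h - C (h + 1) : ℕ) : ℝ) * lam h = g h - g (h + 1) := by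
      intro h hh
      have hposh1 : 0 < C (h + 1) := hpos (h + 1) (by omega)
      have hle : C (h + 1) ≤ C h := (hdec h (by omega)).le
      have hl := hlam (h + 1) (by omega) (by omega)
      rw [Nat.add_sub_cancel] at hl
      have hne : (C (h + 1) : ℝ) ≠ 0 := by positivity
      simp only [hg]
      rw [hl]
      push_cast [hle]
      field_simp
      ring
    have tele : ∑ i ∈ Finset.range (m + 1), ((C i - C (i + 1) : ℕ) : ℝ) * lam i
        = g 0 - g (m + 1) := by
      rw [Finset.sum_congr rfl (fun i hi => key i (Finset.mem_range.mp hi))]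
      exact Finset.sum_range_sub' g (m + 1)
    have hIcc : ∑ h ∈ Finset.Icc 1 (m + 2 - 1), ((C h - C (h + 1) : ℕ) : ℝ) * lam h
        = ∑ i ∈ Finset.range (m + 1), ((C (1 + i) - C (1 + i + 1) : ℕ) : ℝ) * lam (1 + i) := by
      rw [show m + 2 - 1 = m + 1 from rfl, ← Finset.Ico_add_one_right_eq_Icc,
        Finset.sum_Ico_eq_sum_range]
      rfl
    rw [hIcc]
    have hcomb : ((C 0 - C 1 : ℕ) : ℝ) * lam 0
        + ∑ i ∈ Finset.range (m + 1), ((C (1 + i) - C (1 + i + 1) : ℕ) : ℝ) * lam (1 + i)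
        = ∑ i ∈ Finset.range (m + 2), ((C i - C (i + 1) : ℕ) : ℝ) * lam i := by
      rw [Finset.sum_range_succ' (fun i => ((C i - C (i + 1) : ℕ) : ℝ) * lam i) (m + 1)]
      simp only [add_comm 1]
      ring
    rw [add_assoc] at *
    rw [← add_assoc, hcomb, Finset.sum_range_succ, tele]
    have hlast : lam (m + 2) = lam (m + 1) + (C 0 : ℝ) * r (m + 2) := by
      simpa using hlamH
    have hCm2 : C (m + 2) = 1 := hCH
    have hCm1 : 1 ≤ C (m + 1) := hpos (m + 1) (by omega)
    simp only [hg]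
    rw [hlast, hlam0, hCm2]
    push_cast [Nat.cast_sub hCm1]
    ring
end
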